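/- arXiv:2008.08577 — 6 statements merged into one kernel-verified Lean document; each statement's English description precedes it below -/
import Mathlib

section
/- Let F be a real inner product space and let r ≥ 1 be a real number. Then for all x, y ∈ F one has ⟨‖x‖^{r−1}·x − ‖y‖^{r−1}·y, x − y⟩ ≥ (‖x‖^r − ‖y‖^r)(‖x‖ − ‖y‖) ≥ 0; in particular the Forchheimer nonlinearity is a monotone map. -/
/-! Expanding the inner product and bounding `⟪x, y⟫ ≤ ‖x‖ ‖y‖` (the weights are nonnegative) shows
`⟪a • x - b • y, x - y⟫ ≥ (a ‖x‖ - b ‖y‖)(‖x‖ - ‖y‖)` for all `a, b ≥ 0`. With `a = ‖x‖ ^ (r - 1)`,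
`b = ‖y‖ ^ (r - 1)` the right-hand side is `(‖x‖ ^ r - ‖y‖ ^ r)(‖x‖ - ‖y‖)`, which is nonnegative
because `t ↦ t ^ r` is monotone on `[0, ∞)`. -/

open Real

theorem Real.rpow_sub_one_mul_self {t r : ℝ} (ht : 0 ≤ t) (hr : r ≠ 0) :
    t ^ (r - 1) * t = t ^ r := by
  conv_rhs => rw [← sub_add_cancel r 1, rpow_add' ht (by simpa using hr), rpow_one]

theorem Real.rpow_sub_rpow_mul_sub_nonneg {s t r : ℝ} (hs : 0 ≤ s) (ht : 0 ≤ t) (hr : 0 ≤ r) :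
    0 ≤ (s ^ r - t ^ r) * (s - t) := by
  rcases le_total s t with hst | hts
  · exact mul_nonneg_of_nonpos_of_nonpos
      (sub_nonpos.2 (rpow_le_rpow hs hst hr)) (sub_nonpos.2 hst)
  · exact mul_nonneg (sub_nonneg.2 (rpow_le_rpow ht hts hr)) (sub_nonneg.2 hts)

theorem mul_norm_sub_mul_norm_mul_norm_sub_le_real_inner {F : Type*} [NormedAddCommGroup F]
    [InnerProductSpace ℝ F] {a b : ℝ} (ha : 0 ≤ a) (hb : 0 ≤ b) (x y : F) :
    (a * ‖x‖ - b * ‖y‖) * (‖x‖ - ‖y‖) ≤ inner ℝ (a • x - b • y) (x - y) := by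
  have hexpand : inner ℝ (a • x - b • y) (x - y) =
      a * ‖x‖ ^ 2 + b * ‖y‖ ^ 2 - (a + b) * inner ℝ x y := by
    simp only [inner_sub_left, inner_sub_right, real_inner_smul_left, real_inner_self_eq_norm_sq,
      real_inner_comm y x]
    ring
  have hcs : (a + b) * inner ℝ x y ≤ (a + b) * (‖x‖ * ‖y‖) :=
    mul_le_mul_of_nonneg_left (real_inner_le_norm x y) (add_nonneg ha hb)
  rw [hexpand]
  linarith

theorem forchheimer_monotone {F : Type*} [NormedAddCommGroup F] [InnerProductSpace ℝ F]
    (r : ℝ) (hr : 1 ≤ r) (x y : F) :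
    (inner ℝ (‖x‖ ^ (r - 1) • x - ‖y‖ ^ (r - 1) • y) (x - y) : ℝ) ≥
        (‖x‖ ^ r - ‖y‖ ^ r) * (‖x‖ - ‖y‖) ∧
      (‖x‖ ^ r - ‖y‖ ^ r) * (‖x‖ - ‖y‖) ≥ 0 := by
  have hr0 : r ≠ 0 := by positivity
  refine ⟨?_, rpow_sub_rpow_mul_sub_nonneg (norm_nonneg x) (norm_nonneg y) (by positivity)⟩
  have h := mul_norm_sub_mul_norm_mul_norm_sub_le_real_inner
    (rpow_nonneg (norm_nonneg x) (r - 1)) (rpow_nonneg (norm_nonneg y) (r - 1)) x y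
  rwa [rpow_sub_one_mul_self (norm_nonneg x) hr0, rpow_sub_one_mul_self (norm_nonneg y) hr0] at h
end

section
/- Let F be a real inner product space and let r ≥ 1 be a real number. Then for all x, y ∈ F one has ⟨‖x‖^{r−1}·x − ‖y‖^{r−1}·y, x − y⟩ ≥ (1/2)‖x‖^{r−1}‖x − y‖² + (1/2)‖y‖^{r−1}‖x − y‖². -/
/-!
Write `a = ‖x‖ ^ (r - 1)` and `b = ‖y‖ ^ (r - 1)`. The polarisation-type identity
`⟪a • x - b • y, x - y⟫ = (a + b) / 2 * ‖x - y‖ ^ 2 + (a - b) * (‖x‖ ^ 2 - ‖y‖ ^ 2) / 2`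
isolates the claimed lower bound, and the remainder is nonnegative because for `r ≥ 1` both
`‖·‖ ^ (r - 1)` and `‖·‖ ^ 2` are increasing functions of the norm.
-/

open Real

theorem real_inner_smul_sub_smul_sub {F : Type*} [NormedAddCommGroup F] [InnerProductSpace ℝ F]
    (a b : ℝ) (x y : F) :
    inner ℝ (a • x - b • y) (x - y) =
      (a + b) / 2 * ‖x - y‖ ^ 2 + (a - b) * (‖x‖ ^ 2 - ‖y‖ ^ 2) / 2 := by
  rw [norm_sub_sq_real]
  simp only [inner_sub_left, inner_sub_right, real_inner_smul_left,
    real_inner_self_eq_norm_sq, real_inner_comm y x]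
  ring

theorem monovary_norm_rpow_norm_sq {E : Type*} [SeminormedAddGroup E] {p : ℝ} (hp : 0 ≤ p) :
    Monovary (fun v : E ↦ ‖v‖ ^ p) (fun v : E ↦ ‖v‖ ^ 2) := fun _ _ h ↦
  rpow_le_rpow (norm_nonneg _) (pow_lt_pow_iff_left₀ (norm_nonneg _) (norm_nonneg _)
    two_ne_zero |>.mp h).le hp

theorem forchheimer_strong_monotone {F : Type*} [NormedAddCommGroup F] [InnerProductSpace ℝ F]
    (r : ℝ) (hr : 1 ≤ r) (x y : F) :
    (inner ℝ (‖x‖ ^ (r - 1) • x - ‖y‖ ^ (r - 1) • y) (x - y) : ℝ) ≥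
      (1 / 2) * ‖x‖ ^ (r - 1) * ‖x - y‖ ^ 2 + (1 / 2) * ‖y‖ ^ (r - 1) * ‖x - y‖ ^ 2 := by
  have hmono := (monovary_norm_rpow_norm_sq (E := F) (sub_nonneg.mpr hr)).sub_mul_sub_nonneg x y
  rw [real_inner_smul_sub_smul_sub]
  linarith
end

section
/- Let F be a real inner product space and let r ≥ 1 be a real number. Then for all x, y ∈ F one has ‖ ‖x‖^{r−1}·x − ‖y‖^{r−1}·y ‖ ≤ r·(‖x‖ + ‖y‖)^{r−1}·‖x − y‖. -/
/-!
Write `a = ‖x‖ ≥ b = ‖y‖` and split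
`a^(r-1) x - b^(r-1) y = a^(r-1) (x - y) + (a^(r-1) - b^(r-1)) y`.
The first term is at most `a^(r-1) ‖x - y‖`. For the second, the tangent line of the convex
function `t ↦ t^r` at `a` lies below its value at `b`, which rearranges to
`(a^(r-1) - b^(r-1)) b ≤ (r-1) a^(r-1) (a - b) ≤ (r-1) a^(r-1) ‖x - y‖`.
-/

open Real

namespace Real

variable {r a b : ℝ}

lemma rpow_add_mul_rpow_sub_one_mul_sub_le_rpow (hr : 1 ≤ r) (ha : 0 < a) (hb : 0 ≤ b) :
    a ^ r + r * a ^ (r - 1) * (b - a) ≤ b ^ r := by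
  have bernoulli := one_add_mul_self_le_rpow_one_add (s := b / a - 1)
    (by linarith [div_nonneg hb ha.le]) hr
  rw [add_sub_cancel, div_rpow hb ha.le, le_div_iff₀ (rpow_pos_of_pos ha r)] at bernoulli
  have ha_rpow : a ^ r = a ^ (r - 1) * a := by
    rw [← rpow_add_one ha.ne', sub_add_cancel]
  calc a ^ r + r * a ^ (r - 1) * (b - a) = (1 + r * (b / a - 1)) * a ^ r := by
        rw [ha_rpow]; field_simp
    _ ≤ b ^ r := bernoulli

lemma rpow_sub_one_sub_rpow_sub_one_mul_le (hr : 1 ≤ r) (hb : 0 ≤ b) (hba : b ≤ a) :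
    (a ^ (r - 1) - b ^ (r - 1)) * b ≤ (r - 1) * a ^ (r - 1) * (a - b) := by
  rcases (hb.trans hba).eq_or_lt with rfl | ha
  · obtain rfl : b = 0 := le_antisymm hba hb
    simp
  have tangent := rpow_add_mul_rpow_sub_one_mul_sub_le_rpow hr ha hb
  have ha_rpow : a ^ r = a ^ (r - 1) * a := by
    rw [← rpow_add_one ha.ne', sub_add_cancel]
  have hb_rpow : b ^ r = b ^ (r - 1) * b := by
    rw [← rpow_add_one' hb (by linarith), sub_add_cancel]
  rw [ha_rpow, hb_rpow] at tangent
  linarith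

end Real

lemma norm_rpow_smul_sub_rpow_smul_le_of_norm_le {E : Type*} [SeminormedAddCommGroup E]
    [NormedSpace ℝ E] {r : ℝ} (hr : 1 ≤ r) {x y : E} (hyx : ‖y‖ ≤ ‖x‖) :
    ‖‖x‖ ^ (r - 1) • x - ‖y‖ ^ (r - 1) • y‖ ≤ r * ‖x‖ ^ (r - 1) * ‖x - y‖ := by
  have hpow_nonneg : 0 ≤ ‖x‖ ^ (r - 1) := rpow_nonneg (norm_nonneg x) _
  have hpow_le : ‖y‖ ^ (r - 1) ≤ ‖x‖ ^ (r - 1) :=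
    rpow_le_rpow (norm_nonneg y) hyx (by linarith)
  have hsplit : ‖x‖ ^ (r - 1) • x - ‖y‖ ^ (r - 1) • y
      = ‖x‖ ^ (r - 1) • (x - y) + (‖x‖ ^ (r - 1) - ‖y‖ ^ (r - 1)) • y := by
    rw [smul_sub, sub_smul]; abel
  have hscalar : (‖x‖ ^ (r - 1) - ‖y‖ ^ (r - 1)) * ‖y‖ ≤ (r - 1) * ‖x‖ ^ (r - 1) * ‖x - y‖ :=
    (rpow_sub_one_sub_rpow_sub_one_mul_le hr (norm_nonneg y) hyx).trans <|
      mul_le_mul_of_nonneg_left (norm_sub_norm_le x y) (mul_nonneg (by linarith) hpow_nonneg)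
  calc ‖‖x‖ ^ (r - 1) • x - ‖y‖ ^ (r - 1) • y‖
      ≤ ‖x‖ ^ (r - 1) * ‖x - y‖ + (‖x‖ ^ (r - 1) - ‖y‖ ^ (r - 1)) * ‖y‖ := by
        rw [hsplit]
        refine (norm_add_le _ _).trans_eq ?_
        rw [norm_smul, norm_smul, norm_of_nonneg hpow_nonneg, norm_of_nonneg (sub_nonneg.2 hpow_le)]
    _ ≤ r * ‖x‖ ^ (r - 1) * ‖x - y‖ := by linarith

theorem forchheimer_local_lipschitz {F : Type*} [NormedAddCommGroup F] [InnerProductSpace ℝ F]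
    (r : ℝ) (hr : 1 ≤ r) (x y : F) :
    ‖‖x‖ ^ (r - 1) • x - ‖y‖ ^ (r - 1) • y‖ ≤ r * (‖x‖ + ‖y‖) ^ (r - 1) * ‖x - y‖ := by
  wlog hyx : ‖y‖ ≤ ‖x‖ generalizing x y with symm
  · simpa only [norm_sub_rev, add_comm ‖y‖] using symm y x (le_of_not_ge hyx)
  refine (norm_rpow_smul_sub_rpow_smul_le_of_norm_le hr hyx).trans ?_
  gcongr
  exact le_add_of_nonneg_right (norm_nonneg y)
end

section
/- Let (X, m) be a measure space, n ≥ 1, and let r ≥ 1 be a real number. If f, g ∈ L^{r+1}(m; ℝ^n), then the function x ↦ |f(x)|^{r−1}f(x) − |g(x)|^{r−1}g(x) belongs to L^{(r+1)/r}(m; ℝ^n) and ‖ |f|^{r−1}f − |g|^{r−1}g ‖_{L^{(r+1)/r}} ≤ r·(‖f‖_{L^{r+1}} + ‖g‖_{L^{r+1}})^{r−1}·‖f − g‖_{L^{r+1}}. In particular the map u ↦ |u|^{r−1}u from L^{r+1}(m; ℝ^n) to L^{(r+1)/r}(m; ℝ^n) is locally Lipschitz. -/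
/-!
The map `C u = |u|^{r-1} u` satisfies the pointwise bound
`|C a - C b| ≤ r (|a| + |b|)^{r-1} |a - b|`: splitting
`C a - C b = |a|^{r-1} (a - b) + (|a|^{r-1} - |b|^{r-1}) b` with `|b| ≤ |a|`, the second term is
controlled by the tangent line inequality for the convex function `s ↦ s^r`.
Hölder's inequality with `r / (r + 1) = (r - 1) / (r + 1) + 1 / (r + 1)` and Minkowski's inequality
for `|f| + |g|` then integrate this bound.
-/

open Real MeasureTheory ENNReal

lemma ENNReal.holderTriple_div_div_add_one {p q : ℝ≥0∞} (hq : q ≠ ∞) :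
    HolderTriple (p / q) p (p / (q + 1)) := by
  constructor
  rcases eq_or_ne p 0 with rfl | hp0
  · simp
  rw [ENNReal.inv_div (.inl hq) (.inr hp0), ENNReal.inv_div (.inl (by simpa using hq)) (.inr hp0),
    ← ENNReal.div_add_div_same, one_div]

lemma Real.rpow_eq_rpow_sub_one_mul {x : ℝ} (hx : 0 ≤ x) {r : ℝ} (hr : r ≠ 0) :
    x ^ r = x ^ (r - 1) * x := by
  rw [← rpow_add_one' hx (by simpa [sub_eq_zero] using hr), sub_add_cancel]

lemma Real.mul_rpow_sub_one_mul_le {r s t : ℝ} (hr : 1 ≤ r) (hs : 0 ≤ s) (ht : 0 ≤ t) :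
    r * s ^ (r - 1) * t ≤ (r - 1) * s ^ r + t ^ r := by
  rcases hs.eq_or_lt with rfl | hs
  · rcases hr.eq_or_lt with rfl | hr
    · simp
    · rw [zero_rpow (by linarith), zero_rpow (by linarith)]
      simpa using rpow_nonneg ht r
  · have hr0 : 0 < r := by linarith
    -- Bernoulli's inequality `1 + r (u - 1) ≤ u ^ r` at `u = t / s`, multiplied by `s ^ r`
    have hbern := one_add_mul_self_le_rpow_one_add (s := t / s - 1) (by
      have := div_nonneg ht hs.le; linarith) hr
    rw [add_sub_cancel, div_rpow ht hs.le, le_div_iff₀ (rpow_pos_of_pos hs r),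
      rpow_eq_rpow_sub_one_mul (r := r) hs.le hr0.ne'] at hbern
    have hexpand : (1 + r * (t / s - 1)) * (s ^ (r - 1) * s)
        = s ^ (r - 1) * s + r * s ^ (r - 1) * t - r * (s ^ (r - 1) * s) := by
      field_simp
      ring
    rw [rpow_eq_rpow_sub_one_mul (r := r) hs.le hr0.ne']
    linarith

section NormedSpace

variable {E : Type*} [NormedAddCommGroup E] [NormedSpace ℝ E]

lemma norm_rpow_smul_sub_rpow_smul_le_of_norm_le_s5 {r : ℝ} (hr : 1 ≤ r) {a b : E}
    (hab : ‖b‖ ≤ ‖a‖) :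
    ‖‖a‖ ^ (r - 1) • a - ‖b‖ ^ (r - 1) • b‖ ≤ r * ‖a‖ ^ (r - 1) * ‖a - b‖ := by
  have hr0 : 0 < r := by linarith
  have hpow : ‖b‖ ^ (r - 1) ≤ ‖a‖ ^ (r - 1) := rpow_le_rpow (norm_nonneg b) hab (by linarith)
  have hsplit : ‖a‖ ^ (r - 1) • a - ‖b‖ ^ (r - 1) • b
      = ‖a‖ ^ (r - 1) • (a - b) + (‖a‖ ^ (r - 1) - ‖b‖ ^ (r - 1)) • b := by
    rw [smul_sub, sub_smul]; abel
  have hscalar := mul_rpow_sub_one_mul_le hr (norm_nonneg a) (norm_nonneg b)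
  rw [rpow_eq_rpow_sub_one_mul (r := r) (norm_nonneg a) hr0.ne',
    rpow_eq_rpow_sub_one_mul (r := r) (norm_nonneg b) hr0.ne'] at hscalar
  have hcoeff : 0 ≤ (r - 1) * ‖a‖ ^ (r - 1) := mul_nonneg (by linarith) (by positivity)
  calc ‖‖a‖ ^ (r - 1) • a - ‖b‖ ^ (r - 1) • b‖
      ≤ ‖a‖ ^ (r - 1) * ‖a - b‖ + (‖a‖ ^ (r - 1) - ‖b‖ ^ (r - 1)) * ‖b‖ := by
        rw [hsplit]
        refine (norm_add_le _ _).trans_eq ?_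
        rw [norm_smul, norm_smul, norm_of_nonneg (by positivity),
          norm_of_nonneg (sub_nonneg.2 hpow)]
    _ ≤ ‖a‖ ^ (r - 1) * ‖a - b‖ + (r - 1) * ‖a‖ ^ (r - 1) * (‖a‖ - ‖b‖) := by
        linarith
    _ ≤ r * ‖a‖ ^ (r - 1) * ‖a - b‖ := by
        nlinarith [mul_le_mul_of_nonneg_left (norm_sub_norm_le a b) hcoeff]

lemma norm_rpow_smul_sub_rpow_smul_le {r : ℝ} (hr : 1 ≤ r) (a b : E) :
    ‖‖a‖ ^ (r - 1) • a - ‖b‖ ^ (r - 1) • b‖ ≤ r * (‖a‖ + ‖b‖) ^ (r - 1) * ‖a - b‖ := by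
  have hmax : r * max ‖a‖ ‖b‖ ^ (r - 1) * ‖a - b‖ ≤ r * (‖a‖ + ‖b‖) ^ (r - 1) * ‖a - b‖ := by
    have hr0 : 0 ≤ r := by linarith
    gcongr
    exact max_le_add_of_nonneg (norm_nonneg a) (norm_nonneg b)
  refine le_trans ?_ hmax
  rcases le_total ‖b‖ ‖a‖ with hab | hba
  · simpa [max_eq_left hab] using norm_rpow_smul_sub_rpow_smul_le_of_norm_le_s5 hr hab
  · rw [max_eq_right hba, norm_sub_rev, norm_sub_rev a]
    exact norm_rpow_smul_sub_rpow_smul_le_of_norm_le_s5 hr hba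

end NormedSpace

section Measure

variable {α E : Type*} [MeasurableSpace α] {μ : Measure α} [NormedAddCommGroup E]
  {f g : α → E}

lemma eLpNorm_norm_add_norm_rpow_le (hf : AEStronglyMeasurable f μ)
    (hg : AEStronglyMeasurable g μ) {p : ℝ≥0∞} (hp : 1 ≤ p) {q : ℝ} (hq : 0 ≤ q) :
    eLpNorm (fun x => (‖f x‖ + ‖g x‖) ^ q) (p / ENNReal.ofReal q) μ
      ≤ (eLpNorm f p μ + eLpNorm g p μ) ^ q := by
  rcases hq.eq_or_lt with rfl | hq
  · rw [ENNReal.ofReal_zero, ENNReal.div_zero (one_pos.trans_le hp).ne']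
    simpa using eLpNorm_le_of_ae_bound (μ := μ) (p := ∞) (f := fun _ => (1 : ℝ)) (C := 1) (by simp)
  have htri : eLpNorm (fun x => ‖f x‖ + ‖g x‖) p μ ≤ eLpNorm f p μ + eLpNorm g p μ := by
    have := eLpNorm_add_le hf.norm hg.norm hp
    rwa [eLpNorm_norm, eLpNorm_norm] at this
  calc eLpNorm (fun x => (‖f x‖ + ‖g x‖) ^ q) (p / ENNReal.ofReal q) μ
      = eLpNorm (fun x => ‖‖f x‖ + ‖g x‖‖ ^ q) (p / ENNReal.ofReal q) μ := by
        simp only [Real.norm_of_nonneg (add_nonneg (norm_nonneg _) (norm_nonneg _))]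
    _ = eLpNorm (fun x => ‖f x‖ + ‖g x‖) p μ ^ q := by
        rw [eLpNorm_norm_rpow _ hq, ENNReal.div_mul_cancel (by simpa using hq) ofReal_ne_top]
    _ ≤ (eLpNorm f p μ + eLpNorm g p μ) ^ q := by gcongr

lemma eLpNorm_rpow_smul_sub_rpow_smul_le [NormedSpace ℝ E] (hf : AEStronglyMeasurable f μ)
    (hg : AEStronglyMeasurable g μ) {p : ℝ≥0∞} (hp : 1 ≤ p) {r : ℝ} (hr : 1 ≤ r) :
    eLpNorm (fun x => ‖f x‖ ^ (r - 1) • f x - ‖g x‖ ^ (r - 1) • g x) (p / ENNReal.ofReal r) μ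
      ≤ ENNReal.ofReal r * (eLpNorm f p μ + eLpNorm g p μ) ^ (r - 1) * eLpNorm (f - g) p μ := by
  have hr0 : 0 ≤ r := by linarith
  set φ : α → ℝ := fun x => (‖f x‖ + ‖g x‖) ^ (r - 1)
  have hφ : AEStronglyMeasurable φ μ :=
    (continuous_rpow_const (by linarith)).comp_aestronglyMeasurable (hf.norm.add hg.norm)
  have : HolderTriple (p / ENNReal.ofReal (r - 1)) p (p / ENNReal.ofReal r) := by
    have := holderTriple_div_div_add_one (p := p) (ofReal_ne_top (r := r - 1))
    rwa [← ofReal_one, ← ofReal_add (by linarith) zero_le_one, sub_add_cancel] at this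
  calc eLpNorm (fun x => ‖f x‖ ^ (r - 1) • f x - ‖g x‖ ^ (r - 1) • g x) (p / ENNReal.ofReal r) μ
      ≤ eLpNorm (r • φ • (f - g)) (p / ENNReal.ofReal r) μ := by
        refine eLpNorm_mono fun x => ?_
        rw [Pi.smul_apply, Pi.smul_apply', norm_smul, norm_smul, norm_of_nonneg hr0,
          norm_of_nonneg (by positivity), ← mul_assoc]
        exact norm_rpow_smul_sub_rpow_smul_le hr (f x) (g x)
    _ = ENNReal.ofReal r * eLpNorm (φ • (f - g)) (p / ENNReal.ofReal r) μ := by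
        rw [eLpNorm_const_smul, enorm_eq_ofReal hr0]
    _ ≤ ENNReal.ofReal r * (eLpNorm φ (p / ENNReal.ofReal (r - 1)) μ * eLpNorm (f - g) p μ) := by
        gcongr
        exact eLpNorm_smul_le_mul_eLpNorm (hf.sub hg) hφ
    _ ≤ ENNReal.ofReal r * ((eLpNorm f p μ + eLpNorm g p μ) ^ (r - 1) * eLpNorm (f - g) p μ) := by
        gcongr
        exact eLpNorm_norm_add_norm_rpow_le hf hg hp (by linarith)
    _ = _ := (mul_assoc _ _ _).symm

end Measure

theorem forchheimer_Lp_local_lipschitz_general {X : Type*} [MeasurableSpace X] (m : Measure X)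
    (n : ℕ) (r : ℝ) (hr : 1 ≤ r) (f g : X → EuclideanSpace ℝ (Fin n))
    (hf : MemLp f (ENNReal.ofReal (r + 1)) m) (hg : MemLp g (ENNReal.ofReal (r + 1)) m) :
    MemLp (fun x => ‖f x‖ ^ (r - 1) • f x - ‖g x‖ ^ (r - 1) • g x)
        (ENNReal.ofReal ((r + 1) / r)) m ∧
      eLpNorm (fun x => ‖f x‖ ^ (r - 1) • f x - ‖g x‖ ^ (r - 1) • g x)
          (ENNReal.ofReal ((r + 1) / r)) m ≤
        ENNReal.ofReal r *
            (eLpNorm f (ENNReal.ofReal (r + 1)) m + eLpNorm g (ENNReal.ofReal (r + 1)) m)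
              ^ (r - 1) *
          eLpNorm (f - g) (ENNReal.ofReal (r + 1)) m := by
  have hbound := eLpNorm_rpow_smul_sub_rpow_smul_le hf.1 hg.1
    (p := ENNReal.ofReal (r + 1)) (ENNReal.one_le_ofReal.2 (by linarith)) hr
  rw [← ENNReal.ofReal_div_of_pos (by linarith)] at hbound
  have hmeas : AEStronglyMeasurable
      (fun x => ‖f x‖ ^ (r - 1) • f x - ‖g x‖ ^ (r - 1) • g x) m := by
    have hpow := continuous_rpow_const (q := r - 1) (by linarith)
    exact (hpow.comp_aestronglyMeasurable hf.1.norm).smul hf.1 |>.sub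
      ((hpow.comp_aestronglyMeasurable hg.1.norm).smul hg.1)
  refine ⟨⟨hmeas, hbound.trans_lt ?_⟩, hbound⟩
  have hsum : eLpNorm f _ m + eLpNorm g _ m ≠ ∞ := add_ne_top.2 ⟨hf.2.ne, hg.2.ne⟩
  exact mul_lt_top (mul_lt_top ofReal_lt_top (rpow_lt_top_of_nonneg (by linarith) hsum))
    (hf.sub hg).2

theorem forchheimer_Lp_local_lipschitz {X : Type*} [MeasurableSpace X] (m : Measure X)
    (n : ℕ) (hn : 1 ≤ n) (r : ℝ) (hr : 1 ≤ r) (f g : X → EuclideanSpace ℝ (Fin n))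
    (hf : MemLp f (ENNReal.ofReal (r + 1)) m) (hg : MemLp g (ENNReal.ofReal (r + 1)) m) :
    MemLp (fun x => ‖f x‖ ^ (r - 1) • f x - ‖g x‖ ^ (r - 1) • g x)
        (ENNReal.ofReal ((r + 1) / r)) m ∧
      eLpNorm (fun x => ‖f x‖ ^ (r - 1) • f x - ‖g x‖ ^ (r - 1) • g x)
          (ENNReal.ofReal ((r + 1) / r)) m ≤
        ENNReal.ofReal r *
            (eLpNorm f (ENNReal.ofReal (r + 1)) m + eLpNorm g (ENNReal.ofReal (r + 1)) m)
              ^ (r - 1) *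
          eLpNorm (f - g) (ENNReal.ofReal (r + 1)) m :=
  forchheimer_Lp_local_lipschitz_general m n r hr f g hf hg
end

section
/- Let (X, m) be a measure space, n ≥ 1, let r > 3 be a real number and let β, μ > 0, and set η = ((r−3)/(2μ(r−1)))·(2/(βμ(r−1)))^{2/(r−3)}. Then for all u, v ∈ L²(m; ℝ^n) ∩ L^{r+1}(m; ℝ^n) one has ∫_X |v(x)|²|u(x) − v(x)|² dm(x) ≤ 2βμ ∫_X (|u(x)|^{r−1}u(x) − |v(x)|^{r−1}v(x)) · (u(x) − v(x)) dm(x) + 2μη ∫_X |u(x) − v(x)|² dm(x), all integrands being integrable under the stated hypotheses. -/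
open Real MeasureTheory
open scoped RealInnerProductSpace

/-!
Weighted AM–GM with weights `2/p` and `1 - 2/p` gives `t² ≤ a tᵖ + C(a, p)` for `t ≥ 0`; with
`a = βμ`, `p = r - 1` the constant `C` is exactly `2μη`. On the other hand the identity
`2⟪‖a‖^q a - ‖b‖^q b, a - b⟫ - (‖a‖^q + ‖b‖^q) ‖a - b‖² = (‖a‖^q - ‖b‖^q)(‖a‖² - ‖b‖²) ≥ 0`
shows that the monotone term dominates `½ ‖v‖^(r-1) ‖u - v‖²`. Taking `t = ‖v(x)‖`, multiplying by
`‖u(x) - v(x)‖²` and integrating gives the claim; the inner-product integrand is integrable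
because it is bounded by `2 (‖u‖ + ‖v‖)^(r+1)`.
-/

lemma sq_le_mul_rpow_add {a p t : ℝ} (ha : 0 < a) (hp : 2 < p) (ht : 0 ≤ t) :
    t ^ 2 ≤ a * t ^ p + (p - 2) / p * (2 / (a * p)) ^ (2 / (p - 2)) := by
  have hp0 : 0 < p := by linarith
  have hp2 : p - 2 ≠ 0 := by linarith
  set θ := 2 / p with hθ
  set ε := a * p / 2 with hε
  set s := 2 / (p - 2) with hs
  have hε0 : 0 < ε := by positivity
  have hθ1 : θ ≤ 1 := by rw [div_le_one hp0]; linarith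
  have amgm := geom_mean_le_arith_mean2_weighted (by positivity) (sub_nonneg.2 hθ1)
    (by positivity : 0 ≤ ε * t ^ p) (by positivity : 0 ≤ ε ^ (-s)) (add_sub_cancel θ 1)
  have hgeom : (ε * t ^ p) ^ θ * (ε ^ (-s)) ^ (1 - θ) = t ^ 2 := by
    rw [mul_rpow hε0.le (by positivity), ← rpow_mul ht, ← rpow_mul hε0.le,
      show p * θ = 2 by rw [hθ]; field_simp, show -s * (1 - θ) = -θ by rw [hθ, hs]; field_simp,
      rpow_neg hε0.le, rpow_two]
    field_simp
  have harith : θ * (ε * t ^ p) + (1 - θ) * ε ^ (-s) =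
      a * t ^ p + (p - 2) / p * (2 / (a * p)) ^ s := by
    rw [rpow_neg hε0.le, ← inv_rpow hε0.le, hε, inv_div, hθ]
    field_simp
  rwa [hgeom, harith] at amgm

section InnerProductSpace

variable {E : Type*} [NormedAddCommGroup E] [InnerProductSpace ℝ E]

lemma norm_rpow_add_mul_norm_sub_sq_le_two_mul_inner {q : ℝ} (hq : 0 ≤ q) (a b : E) :
    (‖a‖ ^ q + ‖b‖ ^ q) * ‖a - b‖ ^ 2 ≤ 2 * ⟪‖a‖ ^ q • a - ‖b‖ ^ q • b, a - b⟫ := by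
  have hgap : 2 * ⟪‖a‖ ^ q • a - ‖b‖ ^ q • b, a - b⟫ - (‖a‖ ^ q + ‖b‖ ^ q) * ‖a - b‖ ^ 2 =
      (‖a‖ ^ q - ‖b‖ ^ q) * (‖a‖ ^ 2 - ‖b‖ ^ 2) := by
    simp only [norm_sub_sq_real, inner_sub_left, inner_sub_right, real_inner_smul_left,
      real_inner_self_eq_norm_sq, real_inner_comm b a]
    ring
  have hmono : 0 ≤ (‖a‖ ^ q - ‖b‖ ^ q) * (‖a‖ ^ 2 - ‖b‖ ^ 2) := by
    rcases le_total ‖a‖ ‖b‖ with h | h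
    · exact mul_nonneg_of_nonpos_of_nonpos (sub_nonpos.2 (by gcongr)) (sub_nonpos.2 (by gcongr))
    · exact mul_nonneg (sub_nonneg.2 (by gcongr)) (sub_nonneg.2 (by gcongr))
  linarith

lemma norm_sq_mul_norm_sub_sq_le {a p : ℝ} (ha : 0 < a) (hp : 2 < p) (x y : E) :
    ‖y‖ ^ 2 * ‖x - y‖ ^ 2 ≤ 2 * a * ⟪‖x‖ ^ p • x - ‖y‖ ^ p • y, x - y⟫ +
      (p - 2) / p * (2 / (a * p)) ^ (2 / (p - 2)) * ‖x - y‖ ^ 2 := by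
  set C := (p - 2) / p * (2 / (a * p)) ^ (2 / (p - 2))
  have hmono := norm_rpow_add_mul_norm_sub_sq_le_two_mul_inner (by linarith) x y
  calc ‖y‖ ^ 2 * ‖x - y‖ ^ 2 ≤ (a * ‖y‖ ^ p + C) * ‖x - y‖ ^ 2 := by
        gcongr; exact sq_le_mul_rpow_add ha hp (norm_nonneg y)
    _ ≤ (a * (‖x‖ ^ p + ‖y‖ ^ p) + C) * ‖x - y‖ ^ 2 := by
        gcongr; exact le_add_of_nonneg_left (by positivity)
    _ = a * ((‖x‖ ^ p + ‖y‖ ^ p) * ‖x - y‖ ^ 2) + C * ‖x - y‖ ^ 2 := by ring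
    _ ≤ 2 * a * ⟪‖x‖ ^ p • x - ‖y‖ ^ p • y, x - y⟫ + C * ‖x - y‖ ^ 2 := by
        linarith [mul_le_mul_of_nonneg_left hmono ha.le]

lemma abs_inner_rpow_smul_sub_le {q : ℝ} (hq : 0 ≤ q) (a b : E) :
    |⟪‖a‖ ^ q • a - ‖b‖ ^ q • b, a - b⟫| ≤ 2 * (‖a‖ + ‖b‖) ^ (q + 2) := by
  set w := ‖a‖ + ‖b‖
  have hnorm_le : ∀ c : E, ‖c‖ ≤ w → ‖‖c‖ ^ q • c‖ ≤ w ^ (q + 1) := fun c hc => by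
    rw [norm_smul, norm_of_nonneg (by positivity), ← rpow_add_one' (norm_nonneg c) (by linarith)]
    gcongr
  calc |⟪‖a‖ ^ q • a - ‖b‖ ^ q • b, a - b⟫|
      ≤ (‖‖a‖ ^ q • a‖ + ‖‖b‖ ^ q • b‖) * ‖a - b‖ :=
        (abs_real_inner_le_norm _ _).trans (by gcongr; exact norm_sub_le _ _)
    _ ≤ (w ^ (q + 1) + w ^ (q + 1)) * w := by
        gcongr
        · exact hnorm_le a (le_add_of_nonneg_right (norm_nonneg b))
        · exact hnorm_le b (le_add_of_nonneg_left (norm_nonneg a))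
        · exact norm_sub_le a b
    _ = 2 * w ^ (q + 2) := by
        rw [show q + 2 = q + 1 + 1 by ring, rpow_add_one' (y := q + 1) (by positivity) (by linarith)]
        ring

variable {X : Type*} [MeasurableSpace X] {m : Measure X}

lemma integrable_inner_rpow_smul_sub {q : ℝ} (hq : 0 ≤ q) {u v : X → E}
    (hu : MemLp u (ENNReal.ofReal (q + 2)) m) (hv : MemLp v (ENNReal.ofReal (q + 2)) m) :
    Integrable (fun x => ⟪‖u x‖ ^ q • u x - ‖v x‖ ^ q • v x, u x - v x⟫) m := by
  have hum := hu.aestronglyMeasurable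
  have hvm := hv.aestronglyMeasurable
  have hrpow : ∀ {f : X → E}, AEStronglyMeasurable f m →
      AEStronglyMeasurable (fun x => ‖f x‖ ^ q) m := fun hf =>
    (continuous_rpow_const hq).comp_aestronglyMeasurable hf.norm
  have hw : Integrable (fun x => ‖‖u x‖ + ‖v x‖‖ ^ (q + 2)) m := by
    simpa [ENNReal.toReal_ofReal (by linarith : 0 ≤ q + 2)] using
      (hu.norm.add hv.norm).integrable_norm_rpow (by simp; linarith) ENNReal.ofReal_ne_top
  refine (hw.const_mul 2).mono'
    (((hrpow hum).smul hum).sub ((hrpow hvm).smul hvm) |>.inner (hum.sub hvm))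
    (.of_forall fun x => ?_)
  rw [norm_eq_abs, norm_of_nonneg (by positivity)]
  exact abs_inner_rpow_smul_sub_le hq _ _

end InnerProductSpace

theorem monotonicity_quantitative_general {X : Type*} [MeasurableSpace X] (m : Measure X)
    (n : ℕ) (r β μ η : ℝ) (hr : 3 < r) (hβ : 0 < β) (hμ : 0 < μ)
    (hη : η = (r - 3) / (2 * μ * (r - 1)) * (2 / (β * μ * (r - 1))) ^ (2 / (r - 3)))
    (u v : X → EuclideanSpace ℝ (Fin n))
    (hu2 : MemLp u 2 m) (hur : MemLp u (ENNReal.ofReal (r + 1)) m)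
    (hv2 : MemLp v 2 m) (hvr : MemLp v (ENNReal.ofReal (r + 1)) m) :
    (∫ x, ‖v x‖ ^ 2 * ‖u x - v x‖ ^ 2 ∂m) ≤
      2 * β * μ *
          (∫ x, (inner ℝ (‖u x‖ ^ (r - 1) • u x - ‖v x‖ ^ (r - 1) • v x) (u x - v x) : ℝ) ∂m) +
        2 * μ * η * (∫ x, ‖u x - v x‖ ^ 2 ∂m) := by
  have hC : (r - 1 - 2) / (r - 1) * (2 / (β * μ * (r - 1))) ^ (2 / (r - 1 - 2)) = 2 * μ * η := by
    rw [hη, show r - 1 - 2 = r - 3 by ring]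
    field_simp
  rw [show r + 1 = r - 1 + 2 by ring] at hur hvr
  have hinner := (integrable_inner_rpow_smul_sub (by linarith) hur hvr).const_mul (2 * β * μ)
  have hsq : Integrable (fun x => 2 * μ * η * ‖u x - v x‖ ^ 2) m :=
    ((hu2.sub hv2).integrable_norm_pow two_ne_zero).const_mul (2 * μ * η)
  calc ∫ x, ‖v x‖ ^ 2 * ‖u x - v x‖ ^ 2 ∂m
      ≤ ∫ x, 2 * β * μ * ⟪‖u x‖ ^ (r - 1) • u x - ‖v x‖ ^ (r - 1) • v x, u x - v x⟫ +
          2 * μ * η * ‖u x - v x‖ ^ 2 ∂m := by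
        refine integral_mono_of_nonneg (.of_forall fun x => by positivity) (hinner.add hsq)
          (.of_forall fun x => ?_)
        simpa only [hC, ← mul_assoc] using
          norm_sq_mul_norm_sub_sq_le (mul_pos hβ hμ) (by linarith : 2 < r - 1) (u x) (v x)
    _ = _ := by rw [integral_add hinner hsq, integral_const_mul, integral_const_mul]

theorem monotonicity_quantitative {X : Type*} [MeasurableSpace X] (m : Measure X)
    (n : ℕ) (hn : 1 ≤ n) (r β μ η : ℝ) (hr : 3 < r) (hβ : 0 < β) (hμ : 0 < μ)
    (hη : η = (r - 3) / (2 * μ * (r - 1)) * (2 / (β * μ * (r - 1))) ^ (2 / (r - 3)))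
    (u v : X → EuclideanSpace ℝ (Fin n))
    (hu2 : MemLp u 2 m) (hur : MemLp u (ENNReal.ofReal (r + 1)) m)
    (hv2 : MemLp v 2 m) (hvr : MemLp v (ENNReal.ofReal (r + 1)) m) :
    (∫ x, ‖v x‖ ^ 2 * ‖u x - v x‖ ^ 2 ∂m) ≤
      2 * β * μ *
          (∫ x, (inner ℝ (‖u x‖ ^ (r - 1) • u x - ‖v x‖ ^ (r - 1) • v x) (u x - v x) : ℝ) ∂m) +
        2 * μ * η * (∫ x, ‖u x - v x‖ ^ 2 ∂m) :=
  monotonicity_quantitative_general m n r β μ η hr hβ hμ hη u v hu2 hur hv2 hvr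
end

section
/- Let (X, m) be a measure space, n ≥ 1, and let r ≥ 1 be a real number. Then for all u, v ∈ L^{r+1}(m; ℝ^n), the functions x ↦ (|u(x)|^{r−1}u(x) − |v(x)|^{r−1}v(x)) · (u(x) − v(x)) and x ↦ (|u(x)|^{r−1} + |v(x)|^{r−1})|u(x) − v(x)|² are integrable and ∫_X (|u(x)|^{r−1}u(x) − |v(x)|^{r−1}v(x)) · (u(x) − v(x)) dm(x) ≥ (1/2) ∫_X |u(x)|^{r−1}|u(x) − v(x)|² dm(x) + (1/2) ∫_X |v(x)|^{r−1}|u(x) − v(x)|² dm(x) ≥ 0. -/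
/-!
For `α = ‖a‖ ^ (r - 1)` and `β = ‖b‖ ^ (r - 1)` one has the identity
`⟪α a - β b, a - b⟫ = (α + β) / 2 * ‖a - b‖² + (α - β) (‖a‖² - ‖b‖²) / 2`,
whose last term is nonnegative because `t ↦ t ^ (r - 1)` is monotone on `[0, ∞)` when `r ≥ 1`.
Integrating gives the claim. All integrands are dominated by a multiple of
`‖u‖ ^ (r + 1) + ‖v‖ ^ (r + 1) + ‖u - v‖ ^ (r + 1)`, by `a ^ s b ^ t ≤ a ^ (s + t) + b ^ (s + t)`.
-/

open Real MeasureTheory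
open scoped InnerProductSpace

theorem Real.rpow_mul_rpow_le_rpow_add_rpow {a b s t : ℝ} (ha : 0 ≤ a) (hb : 0 ≤ b)
    (hs : 0 ≤ s) (ht : 0 ≤ t) : a ^ s * b ^ t ≤ a ^ (s + t) + b ^ (s + t) := by
  rw [rpow_add_of_nonneg ha hs ht, rpow_add_of_nonneg hb hs ht]
  have hast := mul_nonneg (rpow_nonneg ha s) (rpow_nonneg ha t)
  have hbst := mul_nonneg (rpow_nonneg hb s) (rpow_nonneg hb t)
  rcases le_total a b with hab | hba
  · have : a ^ s * b ^ t ≤ b ^ s * b ^ t := by gcongr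
    linarith
  · have : a ^ s * b ^ t ≤ a ^ s * a ^ t := by gcongr
    linarith

section InnerProductSpace

variable {E : Type*} [NormedAddCommGroup E] [InnerProductSpace ℝ E]

theorem real_inner_smul_sub_smul_sub_eq (α β : ℝ) (a b : E) :
    ⟪α • a - β • b, a - b⟫_ℝ =
      (α + β) / 2 * ‖a - b‖ ^ 2 + (α - β) * (‖a‖ ^ 2 - ‖b‖ ^ 2) / 2 := by
  rw [norm_sub_sq_real]
  simp only [inner_sub_left, inner_sub_right, real_inner_smul_left, real_inner_self_eq_norm_sq,
    real_inner_comm b a]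
  ring

theorem add_div_two_mul_norm_sub_sq_le_real_inner_of_monotoneOn {f : ℝ → ℝ}
    (hf : MonotoneOn f (Set.Ici 0)) (a b : E) :
    (f ‖a‖ + f ‖b‖) / 2 * ‖a - b‖ ^ 2 ≤ ⟪f ‖a‖ • a - f ‖b‖ • b, a - b⟫_ℝ := by
  have h_same_sign : 0 ≤ (f ‖a‖ - f ‖b‖) * (‖a‖ ^ 2 - ‖b‖ ^ 2) := by
    rcases le_total ‖a‖ ‖b‖ with hab | hba
    · refine mul_nonneg_of_nonpos_of_nonpos ?_ ?_
      · exact sub_nonpos.2 (hf (norm_nonneg a) (norm_nonneg b) hab)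
      · exact sub_nonpos.2 (by gcongr)
    · refine mul_nonneg ?_ ?_
      · exact sub_nonneg.2 (hf (norm_nonneg b) (norm_nonneg a) hba)
      · exact sub_nonneg.2 (by gcongr)
  rw [real_inner_smul_sub_smul_sub_eq]
  linarith

theorem norm_norm_rpow_smul {s : ℝ} (hs : s + 1 ≠ 0) (a : E) :
    ‖‖a‖ ^ s • a‖ = ‖a‖ ^ (s + 1) := by
  rw [norm_smul, norm_of_nonneg (rpow_nonneg (norm_nonneg a) s), rpow_add_one' (norm_nonneg a) hs]

theorem abs_real_inner_norm_rpow_smul_sub_le {s : ℝ} (hs : s + 1 ≠ 0) (a b c : E) :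
    |⟪‖a‖ ^ s • a - ‖b‖ ^ s • b, c⟫_ℝ| ≤ ‖a‖ ^ (s + 1) * ‖c‖ + ‖b‖ ^ (s + 1) * ‖c‖ := by
  calc |⟪‖a‖ ^ s • a - ‖b‖ ^ s • b, c⟫_ℝ| ≤ ‖‖a‖ ^ s • a - ‖b‖ ^ s • b‖ * ‖c‖ :=
        abs_real_inner_le_norm _ _
    _ ≤ (‖‖a‖ ^ s • a‖ + ‖‖b‖ ^ s • b‖) * ‖c‖ := by gcongr; exact norm_sub_le _ _
    _ = ‖a‖ ^ (s + 1) * ‖c‖ + ‖b‖ ^ (s + 1) * ‖c‖ := by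
        rw [norm_norm_rpow_smul hs, norm_norm_rpow_smul hs, add_mul]

end InnerProductSpace

namespace MeasureTheory.MemLp

variable {X : Type*} [MeasurableSpace X] {μ : Measure X}

theorem integrable_norm_rpow_of_ofReal {E : Type*} [NormedAddCommGroup E] {f : X → E} {p : ℝ}
    (hp : 0 < p) (hf : MemLp f (ENNReal.ofReal p) μ) : Integrable (fun x => ‖f x‖ ^ p) μ := by
  simpa [ENNReal.toReal_ofReal hp.le] using
    hf.integrable_norm_rpow (by simpa using hp) ENNReal.ofReal_ne_top

theorem integrable_norm_rpow_mul_norm_rpow {E F : Type*} [NormedAddCommGroup E]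
    [NormedAddCommGroup F] {f : X → E} {g : X → F} {s t p : ℝ}
    (hf : MemLp f (ENNReal.ofReal p) μ) (hg : MemLp g (ENNReal.ofReal p) μ) (hs : 0 ≤ s)
    (ht : 0 ≤ t) (hp : 0 < p) (hstp : s + t = p) :
    Integrable (fun x => ‖f x‖ ^ s * ‖g x‖ ^ t) μ := by
  refine ((hf.integrable_norm_rpow_of_ofReal hp).add
    (hg.integrable_norm_rpow_of_ofReal hp)).mono' ?_ (ae_of_all _ fun x => ?_)
  · exact (hf.1.norm.aemeasurable.pow_const s).aestronglyMeasurable.mul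
      (hg.1.norm.aemeasurable.pow_const t).aestronglyMeasurable
  · rw [norm_of_nonneg (by positivity), ← hstp]
    exact rpow_mul_rpow_le_rpow_add_rpow (norm_nonneg _) (norm_nonneg _) hs ht

theorem integrable_real_inner_norm_rpow_smul_sub {E : Type*} [NormedAddCommGroup E]
    [InnerProductSpace ℝ E] {f g : X → E} {r : ℝ} (hr : 0 < r)
    (hf : MemLp f (ENNReal.ofReal (r + 1)) μ) (hg : MemLp g (ENNReal.ofReal (r + 1)) μ) :
    Integrable (fun x => ⟪‖f x‖ ^ (r - 1) • f x - ‖g x‖ ^ (r - 1) • g x, f x - g x⟫_ℝ) μ := by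
  have hfg : MemLp (fun x => f x - g x) (ENNReal.ofReal (r + 1)) μ := hf.sub hg
  refine ((hf.integrable_norm_rpow_mul_norm_rpow hfg hr.le zero_le_one (by linarith) rfl).add
    (hg.integrable_norm_rpow_mul_norm_rpow hfg hr.le zero_le_one (by linarith) rfl)).mono' ?_
    (ae_of_all _ fun x => ?_)
  · exact (((hf.1.norm.aemeasurable.pow_const _).aestronglyMeasurable.smul hf.1).sub
      ((hg.1.norm.aemeasurable.pow_const _).aestronglyMeasurable.smul hg.1)).inner hfg.1
  · rw [Pi.add_apply, norm_eq_abs]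
    simpa only [sub_add_cancel, rpow_one] using
      abs_real_inner_norm_rpow_smul_sub_le (by linarith : r - 1 + 1 ≠ 0) (f x) (g x) (f x - g x)

end MeasureTheory.MemLp

theorem forchheimer_integral_monotonicity_general {X : Type*} [MeasurableSpace X] (m : Measure X)
    (n : ℕ) (r : ℝ) (hr : 1 ≤ r) (u v : X → EuclideanSpace ℝ (Fin n))
    (hu : MemLp u (ENNReal.ofReal (r + 1)) m) (hv : MemLp v (ENNReal.ofReal (r + 1)) m) :
    Integrable
        (fun x => (inner ℝ (‖u x‖ ^ (r - 1) • u x - ‖v x‖ ^ (r - 1) • v x) (u x - v x) : ℝ)) m ∧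
      Integrable (fun x => (‖u x‖ ^ (r - 1) + ‖v x‖ ^ (r - 1)) * ‖u x - v x‖ ^ 2) m ∧
      (1 / 2) * (∫ x, ‖u x‖ ^ (r - 1) * ‖u x - v x‖ ^ 2 ∂m) +
          (1 / 2) * (∫ x, ‖v x‖ ^ (r - 1) * ‖u x - v x‖ ^ 2 ∂m) ≤
        (∫ x, (inner ℝ (‖u x‖ ^ (r - 1) • u x - ‖v x‖ ^ (r - 1) • v x) (u x - v x) : ℝ) ∂m) ∧
      0 ≤ (1 / 2) * (∫ x, ‖u x‖ ^ (r - 1) * ‖u x - v x‖ ^ 2 ∂m) +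
          (1 / 2) * (∫ x, ‖v x‖ ^ (r - 1) * ‖u x - v x‖ ^ 2 ∂m) := by
  have hs : 0 ≤ r - 1 := by linarith
  have hp : 0 < r + 1 := by linarith
  have huv : MemLp (fun x => u x - v x) (ENNReal.ofReal (r + 1)) m := hu.sub hv
  have hU : Integrable (fun x => ‖u x‖ ^ (r - 1) * ‖u x - v x‖ ^ 2) m := by
    simpa only [rpow_two] using
      hu.integrable_norm_rpow_mul_norm_rpow huv hs zero_le_two hp (by ring)
  have hV : Integrable (fun x => ‖v x‖ ^ (r - 1) * ‖u x - v x‖ ^ 2) m := by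
    simpa only [rpow_two] using
      hv.integrable_norm_rpow_mul_norm_rpow huv hs zero_le_two hp (by ring)
  have hI := hu.integrable_real_inner_norm_rpow_smul_sub (by linarith) hv
  refine ⟨hI, (hU.add hV).congr (ae_of_all _ fun x => (add_mul _ _ _).symm), ?_, by positivity⟩
  calc (1 / 2) * (∫ x, ‖u x‖ ^ (r - 1) * ‖u x - v x‖ ^ 2 ∂m) +
          (1 / 2) * (∫ x, ‖v x‖ ^ (r - 1) * ‖u x - v x‖ ^ 2 ∂m)
      = ∫ x, (‖u x‖ ^ (r - 1) + ‖v x‖ ^ (r - 1)) / 2 * ‖u x - v x‖ ^ 2 ∂m := by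
        rw [← integral_const_mul, ← integral_const_mul,
          ← integral_add (hU.const_mul _) (hV.const_mul _)]
        congr with x
        ring
    _ ≤ _ := integral_mono_of_nonneg (ae_of_all _ fun x => by positivity) hI (ae_of_all _ fun x =>
        add_div_two_mul_norm_sub_sq_le_real_inner_of_monotoneOn
          (monotoneOn_rpow_Ici_of_exponent_nonneg hs) (u x) (v x))

theorem forchheimer_integral_monotonicity {X : Type*} [MeasurableSpace X] (m : Measure X)
    (n : ℕ) (hn : 1 ≤ n) (r : ℝ) (hr : 1 ≤ r) (u v : X → EuclideanSpace ℝ (Fin n))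
    (hu : MemLp u (ENNReal.ofReal (r + 1)) m) (hv : MemLp v (ENNReal.ofReal (r + 1)) m) :
    Integrable
        (fun x => (inner ℝ (‖u x‖ ^ (r - 1) • u x - ‖v x‖ ^ (r - 1) • v x) (u x - v x) : ℝ)) m ∧
      Integrable (fun x => (‖u x‖ ^ (r - 1) + ‖v x‖ ^ (r - 1)) * ‖u x - v x‖ ^ 2) m ∧
      (1 / 2) * (∫ x, ‖u x‖ ^ (r - 1) * ‖u x - v x‖ ^ 2 ∂m) +
          (1 / 2) * (∫ x, ‖v x‖ ^ (r - 1) * ‖u x - v x‖ ^ 2 ∂m) ≤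
        (∫ x, (inner ℝ (‖u x‖ ^ (r - 1) • u x - ‖v x‖ ^ (r - 1) • v x) (u x - v x) : ℝ) ∂m) ∧
      0 ≤ (1 / 2) * (∫ x, ‖u x‖ ^ (r - 1) * ‖u x - v x‖ ^ 2 ∂m) +
          (1 / 2) * (∫ x, ‖v x‖ ^ (r - 1) * ‖u x - v x‖ ^ 2 ∂m) :=
  forchheimer_integral_monotonicity_general m n r hr u v hu hv
end
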